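/- arXiv:1809.03297 — 6 statements merged into one kernel-verified Lean document; each statement's English description precedes it below -/
import Mathlib

section
/- If G is a stepwise irregular graph (a simple graph in which for every edge uv, |deg(u) − deg(v)| = 1), then the number of edges of G is even. -/
open SimpleGraph Finset

noncomputable def deg {V : Type*} (G : SimpleGraph V) (v : V) : ℕ := (G.neighborSet v).ncard

/-- A graph is stepwise irregular if for every edge the endpoint degrees differ by exactly 1. -/
def SI {V : Type*} (G : SimpleGraph V) : Prop :=
  ∀ u v, G.Adj u v → |(deg G u : ℤ) - (deg G v : ℤ)| = 1

/-!
Degrees of adjacent vertices of a stepwise irregular graph have opposite parity, so the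
vertices of even degree and those of odd degree form a bipartition. Counting the edges from the
even side gives a sum of even degrees.
-/

lemma Nat.even_iff_odd_of_abs_sub_eq_one {a b : ℕ} (h : |(a : ℤ) - b| = 1) : Even a ↔ Odd b := by
  rw [abs_eq zero_le_one] at h
  rw [Nat.even_iff, Nat.odd_iff]
  omega

namespace SimpleGraph

variable {V : Type*} {G : SimpleGraph V}

lemma deg_eq_degree (G : SimpleGraph V) (v : V) [Fintype (G.neighborSet v)] :
    deg G v = G.degree v := by
  rw [deg, Set.ncard_eq_toFinset_card', ← neighborFinset_def, card_neighborFinset_eq_degree]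

theorem isBipartiteWith_even_odd_degree [G.LocallyFinite]
    (h : ∀ u v, G.Adj u v → (Even (G.degree u) ↔ Odd (G.degree v))) :
    G.IsBipartiteWith {v | Even (G.degree v)} {v | Odd (G.degree v)} where
  disjoint := Set.disjoint_left.mpr fun v hev hodd => Nat.not_even_iff_odd.mpr hodd hev
  mem_of_adj u v huv := by
    simp only [Set.mem_ofPred_eq, ← Nat.not_even_iff_odd, h u v huv]
    tauto

theorem even_card_edgeFinset_of_isBipartiteWith [Fintype V] [DecidableRel G.Adj] {s t : Finset V}
    (h : G.IsBipartiteWith s t) (hs : ∀ v ∈ s, Even (G.degree v)) : Even #G.edgeFinset := by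
  rw [← isBipartiteWith_sum_degrees_eq_card_edges h]
  exact even_sum _ hs

theorem even_card_edgeFinset_of_adj_even_degree_iff_odd [Fintype V] [DecidableRel G.Adj]
    (h : ∀ u v, G.Adj u v → (Even (G.degree u) ↔ Odd (G.degree v))) : Even #G.edgeFinset := by
  refine even_card_edgeFinset_of_isBipartiteWith (s := {v | Even (G.degree v)})
    (t := {v | Odd (G.degree v)}) ?_ fun v hv => (mem_filter.mp hv).2
  simpa only [coe_filter, mem_univ, true_and] using isBipartiteWith_even_odd_degree h

end SimpleGraph

theorem stmt_0 {V : Type*} [Fintype V] (G : SimpleGraph V) (hSI : SI G) :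
    Even G.edgeSet.ncard := by
  classical
  rw [← coe_edgeFinset, Set.ncard_coe_finset]
  refine even_card_edgeFinset_of_adj_even_degree_iff_odd fun u v huv => ?_
  simpa only [deg_eq_degree] using Nat.even_iff_odd_of_abs_sub_eq_one (hSI u v huv)
end

section
/- Every stepwise irregular graph is bipartite. -/
open SimpleGraph

theorem SimpleGraph.colorable_two_of_odd_sub {V : Type*} {G : SimpleGraph V} (f : V → ℤ)
    (h : ∀ u v, G.Adj u v → Odd (f u - f v)) : G.Colorable 2 := by
  let C : G.Coloring Bool := Coloring.mk (fun v => decide (Even (f v))) fun {u v} huv heq => by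
    have hsub := Int.not_even_iff_odd.mpr (h u v huv)
    rw [Int.even_sub] at hsub
    exact hsub (by simpa using heq)
  simpa using C.colorable

theorem SI.odd_sub_deg {V : Type*} {G : SimpleGraph V} (hG : SI G) {u v : V} (h : G.Adj u v) :
    Odd ((deg G u : ℤ) - deg G v) :=
  odd_abs.mp (hG u v h ▸ odd_one)

theorem stmt_1_general {V : Type*} (G : SimpleGraph V) (hSI : SI G) :
    G.Colorable 2 :=
  colorable_two_of_odd_sub _ fun _ _ => hSI.odd_sub_deg

theorem stmt_1 {V : Type*} [Fintype V] (G : SimpleGraph V) (hSI : SI G) :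
    G.Colorable 2 :=
  stmt_1_general G hSI
end

section
/- Let G be a stepwise irregular graph with at least two edges. Then for every edge e of G, the graph G − e obtained by deleting e is not stepwise irregular. -/
open SimpleGraph

/-!
Let `uv` be an edge with `deg u = deg v + 1`; then `deg u ≥ 2` (this needs `v` to have finite degree,
as `ncard` of an infinite set is `0`), so after deleting `uv` the vertex `u` still has a neighbour
`w`, whose degree is unchanged. In `G` the degrees of `u` and `w` differ by
one, so `deg w ∈ {deg u - 1, deg u + 1}`; in `G - uv` they must again differ by one, i.e.
`deg w ∈ {deg u - 2, deg u}`. These are incompatible.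
-/

namespace SimpleGraph

variable {V : Type*} (G : SimpleGraph V)

lemma neighborSet_deleteEdges_left (u v : V) :
    (G.deleteEdges {s(u, v)}).neighborSet u = G.neighborSet u \ {v} := by
  ext y
  simp only [mem_neighborSet, deleteEdges_adj, Set.mem_singleton_iff, Sym2.congr_right,
    Set.mem_sdiff]

lemma neighborSet_deleteEdges_of_ne {u v x : V} (hxu : x ≠ u) (hxv : x ≠ v) :
    (G.deleteEdges {s(u, v)}).neighborSet x = G.neighborSet x := by
  ext y
  simp only [mem_neighborSet, deleteEdges_adj, Set.mem_singleton_iff, Sym2.eq_iff,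
    and_iff_left_iff_imp]
  rintro - (⟨rfl, -⟩ | ⟨rfl, -⟩)
  exacts [hxu rfl, hxv rfl]

end SimpleGraph

section Deg

variable {V : Type*} (G : SimpleGraph V)

lemma deg_deleteEdges_left {u v : V} (h : G.Adj u v) :
    deg (G.deleteEdges {s(u, v)}) u = deg G u - 1 := by
  rw [deg, neighborSet_deleteEdges_left,
    Set.ncard_sdiff_singleton_of_mem (s := G.neighborSet u) h, deg]

lemma deg_deleteEdges_of_ne {u v x : V} (hxu : x ≠ u) (hxv : x ≠ v) :
    deg (G.deleteEdges {s(u, v)}) x = deg G x := by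
  rw [deg, neighborSet_deleteEdges_of_ne G hxu hxv, deg]

lemma one_le_deg {u v : V} (h : G.Adj u v) (hfin : (G.neighborSet u).Finite) : 1 ≤ deg G u :=
  Nat.one_le_iff_ne_zero.mpr (Set.ncard_ne_zero_of_mem h hfin)

end Deg

namespace SI

variable {V : Type*} {G : SimpleGraph V}

lemma deg_eq_succ_or_succ_eq (hG : SI G) {u v : V} (h : G.Adj u v) :
    deg G u = deg G v + 1 ∨ deg G v = deg G u + 1 := by
  rcases abs_eq zero_le_one |>.mp (hG u v h) with h' | h' <;> omega

lemma not_deleteEdges_of_deg_eq_succ (hG : SI G) {u v : V} (h : G.Adj u v)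
    (hv : (G.neighborSet v).Finite) (hd : deg G u = deg G v + 1) :
    ¬ SI (G.deleteEdges {s(u, v)}) := by
  intro hG'
  have hv1 := one_le_deg G h.symm hv
  have hdu : deg (G.deleteEdges {s(u, v)}) u = deg G v := by
    rw [deg_deleteEdges_left G h]; omega
  obtain ⟨w, huw⟩ : ((G.deleteEdges {s(u, v)}).neighborSet u).Nonempty :=
    Set.nonempty_of_ncard_ne_zero (by change deg _ u ≠ 0; omega)
  have huw' : (G.deleteEdges {s(u, v)}).Adj u w := huw
  obtain ⟨hGuw, hne⟩ := deleteEdges_adj.mp huw'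
  have hwv : w ≠ v := by rintro rfl; exact hne rfl
  have hdw := deg_deleteEdges_of_ne G hGuw.ne.symm hwv
  rcases hG.deg_eq_succ_or_succ_eq hGuw with h1 | h1 <;>
  rcases hG'.deg_eq_succ_or_succ_eq huw' with h2 | h2 <;> omega

end SI

theorem stmt_6_general {V : Type*} [Fintype V] (G : SimpleGraph V) (hSI : SI G)
    (e : Sym2 V) (he : e ∈ G.edgeSet) :
    ¬ SI (G.deleteEdges {e}) := by
  induction e using Sym2.ind with
  | _ u v =>
    rw [mem_edgeSet] at he
    rcases hSI.deg_eq_succ_or_succ_eq he with h | h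
    · exact hSI.not_deleteEdges_of_deg_eq_succ he (Set.toFinite _) h
    · rw [Sym2.eq_swap]
      exact hSI.not_deleteEdges_of_deg_eq_succ he.symm (Set.toFinite _) h

theorem stmt_6 {V : Type*} [Fintype V] (G : SimpleGraph V) (hSI : SI G)
    (hm : 2 ≤ G.edgeSet.ncard) (e : Sym2 V) (he : e ∈ G.edgeSet) :
    ¬ SI (G.deleteEdges {e}) :=
  stmt_6_general G hSI e he
end

section
/- If G is a stepwise irregular graph with at least one edge, then the subdivision graph S(G) is not stepwise irregular. -/
/-!
In S(G) every original vertex keeps its degree and every subdivision vertex has degree 2. If S(G)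
were stepwise irregular, the two ends u, v of an edge of G, both adjacent to the vertex of degree 2
on that edge, would have degrees in {1, 3}; these differ by 0 or 2, never by 1 as G demands.
-/

open SimpleGraph

/-- The subdivision graph: insert a new vertex of degree 2 on each edge. -/
def subdivision {V : Type*} (G : SimpleGraph V) : SimpleGraph (V ⊕ G.edgeSet) where
  Adj a b :=
    match a, b with
    | Sum.inl v, Sum.inr e => v ∈ (e : Sym2 V)
    | Sum.inr e, Sum.inl v => v ∈ (e : Sym2 V)
    | _, _ => False
  symm := ⟨by rintro (v|e) (w|f) h <;> simp_all⟩
  loopless := ⟨by rintro (v|e) h <;> simp_all⟩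
namespace SimpleGraph

variable {V : Type*} (G : SimpleGraph V)

lemma subdivision_neighborSet_inr (u v : V) (h : s(u, v) ∈ G.edgeSet) :
    (subdivision G).neighborSet (Sum.inr ⟨s(u, v), h⟩) = {Sum.inl u, Sum.inl v} := by
  ext (w | f) <;> simp [neighborSet, subdivision, Sym2.mem_iff]

lemma deg_subdivision_inr (e : G.edgeSet) : deg (subdivision G) (Sum.inr e) = 2 := by
  obtain ⟨e, he⟩ := e
  induction e with
  | h u v =>
    rw [deg, subdivision_neighborSet_inr G u v he,
      Set.ncard_pair (by simpa using G.ne_of_adj he)]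

lemma subdivision_neighborSet_inl (v : V) :
    (subdivision G).neighborSet (Sum.inl v) = Sum.inr '' {e : G.edgeSet | v ∈ (e : Sym2 V)} := by
  ext (w | f) <;> simp [neighborSet, subdivision]

lemma deg_subdivision_inl (v : V) : deg (subdivision G) (Sum.inl v) = deg G v := by
  have hinc : (Subtype.val '' {e : G.edgeSet | v ∈ (e : Sym2 V)}) = G.incidenceSet v := by
    ext e
    simp [incidenceSet, and_comm]
  rw [deg, deg, subdivision_neighborSet_inl, Set.ncard_image_of_injective _ Sum.inr_injective,
    ← Set.ncard_image_of_injective _ Subtype.val_injective, hinc, ← Nat.card_coe_set_eq,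
    ← Nat.card_coe_set_eq]
  classical
  exact Nat.card_congr (G.incidenceSetEquivNeighborSet v)

end SimpleGraph

theorem stmt_9_general {V : Type*} (G : SimpleGraph V) (hSI : SI G)
    (he : G.edgeSet.Nonempty) :
    ¬ SI (subdivision G) := by
  obtain ⟨⟨u, v⟩, huv⟩ := he
  intro hS
  have hG := hSI u v huv
  have hu := hS (Sum.inl u) (Sum.inr ⟨s(u, v), huv⟩) (by simp [subdivision])
  have hv := hS (Sum.inl v) (Sum.inr ⟨s(u, v), huv⟩) (by simp [subdivision])
  rw [deg_subdivision_inl, deg_subdivision_inr] at hu hv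
  rw [abs_eq one_pos.le] at hG hu hv
  omega

theorem stmt_9 {V : Type*} [Fintype V] (G : SimpleGraph V) (hSI : SI G)
    (he : G.edgeSet.Nonempty) :
    ¬ SI (subdivision G) :=
  stmt_9_general G hSI he
end

section
/- If G is a stepwise irregular graph with at least two edges sharing a common vertex, then the line graph L(G) is not stepwise irregular. -/
open SimpleGraph

/-! Along an edge `uv` of a stepwise irregular graph the degrees change parity, so the two other
endpoints `v, w` of adjacent edges `uv, uw` have degrees of equal parity. The degrees of `uv` and
`uw` in the line graph differ by exactly `deg v - deg w`, which is therefore even, never `±1`. -/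

namespace SimpleGraph

variable {V : Type*} {G : SimpleGraph V} {u v w : V}

lemma ncard_incidenceSet (v : V) : (G.incidenceSet v).ncard = deg G v := by
  classical
  simp only [deg, ← Nat.card_coe_set_eq]
  exact Nat.card_congr (G.incidenceSetEquivNeighborSet v)

lemma image_val_neighborSet_lineGraph (h : G.Adj u v) :
    Subtype.val '' G.lineGraph.neighborSet ⟨s(u, v), h⟩ =
      (G.incidenceSet u ∪ G.incidenceSet v) \ {s(u, v)} := by
  ext e
  simp only [Set.mem_image, mem_neighborSet, lineGraph_adj_iff_exists, Set.mem_sdiff,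
    Set.mem_union, Set.mem_singleton_iff, incidenceSet, Set.mem_ofPred_eq, Sym2.mem_iff]
  constructor
  · rintro ⟨⟨e, he⟩, ⟨hne, x, rfl | rfl, hx⟩, rfl⟩
    · exact ⟨Or.inl ⟨he, hx⟩, fun h' => hne (Subtype.ext h'.symm)⟩
    · exact ⟨Or.inr ⟨he, hx⟩, fun h' => hne (Subtype.ext h'.symm)⟩
  · rintro ⟨⟨he, hu⟩ | ⟨he, hv⟩, hne⟩
    · exact ⟨⟨e, he⟩, ⟨fun h' => hne (congrArg Subtype.val h').symm, u, Or.inl rfl, hu⟩,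
        rfl⟩
    · exact ⟨⟨e, he⟩, ⟨fun h' => hne (congrArg Subtype.val h').symm, v, Or.inr rfl, hv⟩,
        rfl⟩

lemma deg_lineGraph_add_two [Finite V] (h : G.Adj u v) :
    deg G.lineGraph ⟨s(u, v), h⟩ + 2 = deg G u + deg G v := by
  have hmem : s(u, v) ∈ G.incidenceSet u ∪ G.incidenceSet v :=
    Or.inl ⟨h, Sym2.mem_mk_left u v⟩
  have hunion := Set.ncard_union_add_ncard_inter (G.incidenceSet u) (G.incidenceSet v)
  rw [G.incidenceSet_inter_incidenceSet_of_adj h, Set.ncard_singleton, ncard_incidenceSet,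
    ncard_incidenceSet] at hunion
  rw [deg, ← Set.ncard_image_of_injective _ Subtype.val_injective,
    image_val_neighborSet_lineGraph h, ← hunion, ← Set.ncard_sdiff_singleton_add_one hmem]

lemma lineGraph_adj_of_adj_of_adj (hv : G.Adj u v) (hw : G.Adj u w) (hvw : v ≠ w) :
    G.lineGraph.Adj ⟨s(u, v), hv⟩ ⟨s(u, w), hw⟩ :=
  lineGraph_adj_iff_exists.mpr
    ⟨fun h => hvw (Sym2.congr_right.mp (congrArg Subtype.val h)), u,
      Sym2.mem_mk_left u v, Sym2.mem_mk_left u w⟩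

end SimpleGraph

namespace SI

variable {V : Type*} {G : SimpleGraph V} {u v w : V}

lemma odd_deg_sub_deg (hG : SI G) (h : G.Adj u v) : Odd ((deg G u : ℤ) - deg G v) :=
  odd_abs.mp (hG u v h ▸ odd_one)

lemma even_deg_sub_deg_of_adj_of_adj (hG : SI G) (hv : G.Adj u v) (hw : G.Adj u w) :
    Even ((deg G v : ℤ) - deg G w) := by
  simpa using (hG.odd_deg_sub_deg hw).sub_odd (hG.odd_deg_sub_deg hv)

end SI

theorem stmt_12 {V : Type*} [Fintype V] (G : SimpleGraph V) (hSI : SI G)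
    (h2 : ∃ u v w : V, v ≠ w ∧ G.Adj u v ∧ G.Adj u w) :
    ¬ SI G.lineGraph := by
  obtain ⟨u, v, w, hvw, huv, huw⟩ := h2
  intro hL
  have hodd := hL.odd_deg_sub_deg (lineGraph_adj_of_adj_of_adj huv huw hvw)
  have hdiff : (deg G.lineGraph ⟨s(u, v), huv⟩ : ℤ) - deg G.lineGraph ⟨s(u, w), huw⟩ =
      (deg G v : ℤ) - deg G w := by
    have := deg_lineGraph_add_two huv
    have := deg_lineGraph_add_two huw
    omega
  rw [hdiff] at hodd
  exact Int.not_even_iff_odd.mpr hodd (hSI.even_deg_sub_deg_of_adj_of_adj huv huw)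
end

section
/- For every m ≥ 1, the complete bipartite graph K_{m, m+1} is stepwise irregular, and for odd n ≥ 3 the graph K_{(n−1)/2, (n+1)/2} is a connected stepwise irregular graph on n vertices with exactly (n² − 1)/4 edges. -/
open SimpleGraph

namespace SimpleGraph

variable {A B : Type*}

lemma neighborSet_completeBipartiteGraph_inl (a : A) :
    (completeBipartiteGraph A B).neighborSet (.inl a) = Set.range .inr := by
  ext v; cases v <;> simp

lemma neighborSet_completeBipartiteGraph_inr (b : B) :
    (completeBipartiteGraph A B).neighborSet (.inr b) = Set.range .inl := by
  ext v; cases v <;> simp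

lemma deg_completeBipartiteGraph_inl (a : A) :
    deg (completeBipartiteGraph A B) (.inl a) = Nat.card B := by
  rw [deg, neighborSet_completeBipartiteGraph_inl, Set.ncard_range_of_injective Sum.inr_injective]

lemma deg_completeBipartiteGraph_inr (b : B) :
    deg (completeBipartiteGraph A B) (.inr b) = Nat.card A := by
  rw [deg, neighborSet_completeBipartiteGraph_inr, Set.ncard_range_of_injective Sum.inl_injective]

lemma SI_completeBipartiteGraph (h : |(Nat.card A : ℤ) - Nat.card B| = 1) :
    SI (completeBipartiteGraph A B) := by
  rintro (a | b) (a' | b') hadj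
  · simp at hadj
  · rwa [deg_completeBipartiteGraph_inl, deg_completeBipartiteGraph_inr, abs_sub_comm]
  · rwa [deg_completeBipartiteGraph_inr, deg_completeBipartiteGraph_inl]
  · simp at hadj

lemma connected_completeBipartiteGraph [Nonempty A] [Nonempty B] :
    (completeBipartiteGraph A B).Connected := by
  obtain ⟨a₀⟩ := ‹Nonempty A›
  obtain ⟨b₀⟩ := ‹Nonempty B›
  have reachable_inl : ∀ v, (completeBipartiteGraph A B).Reachable (.inl a₀) v := by
    rintro (a | b)
    · have hb₀a : (completeBipartiteGraph A B).Adj (.inr b₀) (.inl a) := by simp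
      exact (Adj.reachable (by simp)).trans hb₀a.reachable
    · exact Adj.reachable (by simp)
  exact (connected_iff_exists_forall_reachable _).2 ⟨.inl a₀, reachable_inl⟩

lemma ncard_edgeSet_completeBipartiteGraph :
    (completeBipartiteGraph A B).edgeSet.ncard = Nat.card A * Nat.card B := by
  rw [Set.ncard_def, encard_edgeSet_completeBipartiteGraph, ENat.toNat_mul]
  rfl

end SimpleGraph

theorem stmt_18 :
    (∀ m : ℕ, 1 ≤ m → SI (completeBipartiteGraph (Fin m) (Fin (m + 1)))) ∧
    (∀ n : ℕ, 3 ≤ n → Odd n →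
      (completeBipartiteGraph (Fin ((n - 1) / 2)) (Fin ((n + 1) / 2))).Connected ∧
      SI (completeBipartiteGraph (Fin ((n - 1) / 2)) (Fin ((n + 1) / 2))) ∧
      Fintype.card (Fin ((n - 1) / 2) ⊕ Fin ((n + 1) / 2)) = n ∧
      (completeBipartiteGraph (Fin ((n - 1) / 2)) (Fin ((n + 1) / 2))).edgeSet.ncard
        = (n ^ 2 - 1) / 4) := by
  have SI_succ (m : ℕ) : SI (completeBipartiteGraph (Fin m) (Fin (m + 1))) :=
    SI_completeBipartiteGraph (by simp)
  refine ⟨fun m _ ↦ SI_succ m, fun n hn ⟨k, hk⟩ ↦ ?_⟩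
  rw [show (n - 1) / 2 = k by omega, show (n + 1) / 2 = k + 1 by omega]
  have : Nonempty (Fin k) := ⟨⟨0, by omega⟩⟩
  refine ⟨connected_completeBipartiteGraph, SI_succ k, by rw [Fintype.card_sum, Fintype.card_fin, Fintype.card_fin]; omega, ?_⟩
  rw [ncard_edgeSet_completeBipartiteGraph, Nat.card_fin, Nat.card_fin, hk]
  have hsq : (2 * k + 1) ^ 2 - 1 = 4 * (k * (k + 1)) := by ring_nf; omega
  omega
end
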